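/- (Lemma: asymptotic optimality inequalities.) Under the algorithm setup with Assumption 1, Condition (C1), and Condition (C2): for every entrywise-nonnegative W ∈ ℝ^{M×R} and every entrywise-nonnegative H ∈ ℝ^{R×N}, limsup_{n→∞} (T_n(H_n) − H) • (W_nᵀ(W_n H_n − V)) ≤ 0 and limsup_{n→∞} (S_n(W_n) − W) • ((W_n H_{n+1} − V) H_{n+1}ᵀ) ≤ 0. -/

import Mathlib

open Matrix Filter

noncomputable def frob {m n : Type*} [Fintype m] [Fintype n] (X : Matrix m n ℝ) : ℝ :=
  Real.sqrt (∑ i, ∑ j, (X i j) ^ 2)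

noncomputable def fip {m n : Type*} [Fintype m] [Fintype n] (X Y : Matrix m n ℝ) : ℝ :=
  ∑ i, ∑ j, X i j * Y i j

def pplus {m n : Type*} (X : Matrix m n ℝ) : Matrix m n ℝ :=
  Matrix.of fun i j => max (X i j) 0

def matNonneg {m n : Type*} (X : Matrix m n ℝ) : Prop := ∀ i j, 0 ≤ X i j

section Toolbox
variable {m n p : Type*} [Fintype m] [Fintype n] [Fintype p]

lemma fip_comm (X Y : Matrix m n ℝ) : fip X Y = fip Y X := by
  simp [fip, mul_comm]

lemma fip_self_nonneg (X : Matrix m n ℝ) : 0 ≤ fip X X :=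
  Finset.sum_nonneg fun _ _ => Finset.sum_nonneg fun _ _ => mul_self_nonneg _

lemma frob_eq (X : Matrix m n ℝ) : frob X = Real.sqrt (fip X X) := by
  simp [frob, fip, sq]

lemma frob_nonneg (X : Matrix m n ℝ) : 0 ≤ frob X := Real.sqrt_nonneg _

lemma sq_frob (X : Matrix m n ℝ) : (frob X) ^ 2 = fip X X := by
  rw [frob_eq, Real.sq_sqrt (fip_self_nonneg X)]

lemma fip_add_left (X Y Z : Matrix m n ℝ) : fip (X + Y) Z = fip X Z + fip Y Z := by
  simp [fip, Matrix.add_apply, add_mul, Finset.sum_add_distrib]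

lemma fip_sub_left (X Y Z : Matrix m n ℝ) : fip (X - Y) Z = fip X Z - fip Y Z := by
  simp [fip, Matrix.sub_apply, sub_mul, Finset.sum_sub_distrib]

lemma fip_smul_left (c : ℝ) (X Z : Matrix m n ℝ) : fip (c • X) Z = c * fip X Z := by
  simp [fip, Matrix.smul_apply, smul_eq_mul, Finset.mul_sum, mul_assoc]

lemma fip_add_right (X Y Z : Matrix m n ℝ) : fip Z (X + Y) = fip Z X + fip Z Y := by
  rw [fip_comm, fip_add_left, fip_comm X Z, fip_comm Y Z]

lemma fip_sub_right (X Y Z : Matrix m n ℝ) : fip Z (X - Y) = fip Z X - fip Z Y := by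
  rw [fip_comm, fip_sub_left, fip_comm X Z, fip_comm Y Z]

lemma fip_smul_right (c : ℝ) (X Z : Matrix m n ℝ) : fip Z (c • X) = c * fip Z X := by
  rw [fip_comm, fip_smul_left, fip_comm X Z]

lemma fip_neg_left (X Z : Matrix m n ℝ) : fip (-X) Z = - fip X Z := by
  simp [fip, Finset.sum_neg_distrib]

lemma frob_neg (X : Matrix m n ℝ) : frob (-X) = frob X := by
  simp [frob]

lemma fip_le (X Y : Matrix m n ℝ) : fip X Y ≤ frob X * frob Y := by
  have h := Real.sum_mul_le_sqrt_mul_sqrt (Finset.univ : Finset (m × n))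
    (fun q => X q.1 q.2) (fun q => Y q.1 q.2)
  rw [fip, frob, frob]
  simp only [Fintype.sum_prod_type] at h
  exact h

lemma abs_fip_le (X Y : Matrix m n ℝ) : |fip X Y| ≤ frob X * frob Y := by
  rcases abs_cases (fip X Y) with ⟨h, _⟩ | ⟨h, _⟩
  · rw [h]; exact fip_le X Y
  · rw [h, ← fip_neg_left, ← frob_neg X]; exact fip_le (-X) Y

lemma le_of_sq_le_sq' {a b : ℝ} (ha : 0 ≤ a) (hb : 0 ≤ b) (h : a ^ 2 ≤ b ^ 2) : a ≤ b := by
  nlinarith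

lemma frob_add_le (X Y : Matrix m n ℝ) : frob (X + Y) ≤ frob X + frob Y := by
  refine le_of_sq_le_sq' (frob_nonneg _) (add_nonneg (frob_nonneg _) (frob_nonneg _)) ?_
  have h1 : fip (X + Y) (X + Y) = fip X X + 2 * fip X Y + fip Y Y := by
    rw [fip_add_left, fip_add_right, fip_add_right, fip_comm Y X]; ring
  have h2 := fip_le X Y
  rw [sq_frob]
  nlinarith [sq_frob X, sq_frob Y]

lemma frob_sub_le (X Y : Matrix m n ℝ) : frob (X - Y) ≤ frob X + frob Y := by
  have := frob_add_le X (-Y)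
  simpa [sub_eq_add_neg, frob_neg] using this

lemma fip_transpose (X Y : Matrix m n ℝ) : fip Xᵀ Yᵀ = fip X Y := by
  rw [fip, fip, Finset.sum_comm]
  rfl

lemma frob_transpose (X : Matrix m n ℝ) : frob Xᵀ = frob X := by
  rw [frob_eq, frob_eq, fip_transpose]

lemma frob_mul_le (X : Matrix m n ℝ) (Y : Matrix n p ℝ) : frob (X * Y) ≤ frob X * frob Y := by
  refine le_of_sq_le_sq' (frob_nonneg _) (mul_nonneg (frob_nonneg _) (frob_nonneg _)) ?_
  rw [sq_frob, mul_pow, sq_frob, sq_frob]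
  unfold fip
  calc ∑ i, ∑ j, (X * Y) i j * (X * Y) i j
      ≤ ∑ i, ∑ j, (∑ k, (X i k)^2) * (∑ k, (Y k j)^2) := by
        refine Finset.sum_le_sum fun i _ => Finset.sum_le_sum fun j _ => ?_
        have := Finset.sum_mul_sq_le_sq_mul_sq Finset.univ (fun k => X i k) (fun k => Y k j)
        simpa [Matrix.mul_apply, sq] using this
    _ = (∑ i, ∑ k, (X i k)^2) * (∑ j, ∑ k, (Y k j)^2) := by
        rw [← Finset.sum_mul_sum]
    _ = (∑ i, ∑ k, X i k * X i k) * (∑ k, ∑ j, Y k j * Y k j) := by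
        congr 1
        · simp [sq]
        · rw [Finset.sum_comm]; simp [sq]
    _ = _ := rfl

lemma fip_mul_left' (A : Matrix m n ℝ) (B : Matrix n p ℝ) (C : Matrix m p ℝ) :
    fip (A * B) C = fip B (Aᵀ * C) := by
  unfold fip
  have h1 : ∀ i j, (A * B) i j * C i j = ∑ k, A i k * B k j * C i j := by
    intro i j; rw [Matrix.mul_apply, Finset.sum_mul]
  have h2 : ∀ k j, B k j * (Aᵀ * C) k j = ∑ i, A i k * B k j * C i j := by
    intro k j
    rw [Matrix.mul_apply, Finset.mul_sum]
    exact Finset.sum_congr rfl fun i _ => by rw [transpose_apply]; ring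
  simp_rw [h1, h2]
  calc (∑ i, ∑ j, ∑ k, A i k * B k j * C i j)
      = ∑ i, ∑ k, ∑ j, A i k * B k j * C i j :=
        Finset.sum_congr rfl fun i _ => Finset.sum_comm
    _ = ∑ k, ∑ i, ∑ j, A i k * B k j * C i j := Finset.sum_comm
    _ = ∑ k, ∑ j, ∑ i, A i k * B k j * C i j :=
        Finset.sum_congr rfl fun k _ => Finset.sum_comm

lemma fip_gram (Wm : Matrix m n ℝ) (D : Matrix n p ℝ) :
    fip D (Wmᵀ * (Wm * D)) = fip (Wm * D) (Wm * D) := by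
  rw [fip_mul_left' Wm D (Wm * D), fip_comm]

lemma frob_gram (A : Matrix m n ℝ) : frob (A * Aᵀ) = frob (Aᵀ * A) := by
  rw [frob_eq, frob_eq]
  congr 1
  have h1 : fip (A * Aᵀ) (A * Aᵀ) = fip A (A * Aᵀ * A) := by
    rw [fip_mul_left' A Aᵀ (A * Aᵀ), ← fip_transpose Aᵀ (Aᵀ * (A * Aᵀ))]
    rw [transpose_transpose]
    congr 1
    rw [transpose_mul, transpose_mul, transpose_transpose, Matrix.mul_assoc]
  have h2 : fip (Aᵀ * A) (Aᵀ * A) = fip A (A * Aᵀ * A) := by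
    rw [fip_mul_left' Aᵀ A (Aᵀ * A), transpose_transpose, ← Matrix.mul_assoc]
  rw [h1, h2]

lemma entry_le_frob (X : Matrix m n ℝ) (i : m) (j : n) : |X i j| ≤ frob X := by
  rw [frob, ← Real.sqrt_sq_eq_abs]
  apply Real.sqrt_le_sqrt
  calc (X i j)^2 ≤ ∑ j', (X i j')^2 :=
        Finset.single_le_sum (f := fun j' => (X i j')^2) (fun _ _ => sq_nonneg _)
          (Finset.mem_univ j)
    _ ≤ ∑ i', ∑ j', (X i' j')^2 :=
        Finset.single_le_sum (f := fun i' => ∑ j', (X i' j')^2)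
          (fun _ _ => Finset.sum_nonneg fun _ _ => sq_nonneg _) (Finset.mem_univ i)

lemma frob_gram_pos (Wm : Matrix m n ℝ) (hW : Wm ≠ 0) : 0 < frob (Wmᵀ * Wm) := by
  have : ∃ i j, Wm i j ≠ 0 := by
    by_contra h
    push_neg at h
    exact hW (by ext i j; simpa using h i j)
  obtain ⟨i, j, hij⟩ := this
  have hd : 0 < (Wmᵀ * Wm) j j := by
    rw [Matrix.mul_apply]
    refine Finset.sum_pos' (fun k _ => ?_) ⟨i, Finset.mem_univ i, ?_⟩
    · simp only [transpose_apply]; exact mul_self_nonneg _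
    · simp only [transpose_apply]; exact mul_self_pos.mpr hij
  calc (0:ℝ) < (Wmᵀ * Wm) j j := hd
    _ ≤ |(Wmᵀ * Wm) j j| := le_abs_self _
    _ ≤ frob (Wmᵀ * Wm) := entry_le_frob _ j j

lemma pplus_proj (X Y : Matrix m n ℝ) (hY : matNonneg Y) :
    fip (X - pplus X) (Y - pplus X) ≤ 0 := by
  refine Finset.sum_nonpos fun i _ => Finset.sum_nonpos fun j _ => ?_
  simp only [Matrix.sub_apply, pplus, Matrix.of_apply]
  rcases le_or_gt 0 (X i j) with h | h
  · rw [max_eq_left h]; simp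
  · rw [max_eq_right h.le]
    simp only [sub_zero]
    exact mul_nonpos_of_nonpos_of_nonneg h.le (hY i j)

lemma pplus_lip (X Y : Matrix m n ℝ) : frob (pplus X - pplus Y) ≤ frob (X - Y) := by
  unfold frob
  apply Real.sqrt_le_sqrt
  refine Finset.sum_le_sum fun i _ => Finset.sum_le_sum fun j _ => ?_
  simp only [Matrix.sub_apply, pplus, Matrix.of_apply]
  have h := abs_max_sub_max_le_abs (X i j) (Y i j) 0
  calc (max (X i j) 0 - max (Y i j) 0)^2 = |max (X i j) 0 - max (Y i j) 0|^2 := (sq_abs _).symm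
    _ ≤ |X i j - Y i j|^2 := by
        exact pow_le_pow_left₀ (abs_nonneg _) h 2
    _ = (X i j - Y i j)^2 := sq_abs _

lemma km_id (a : ℝ) (X Y : Matrix m n ℝ) :
    (frob (a • X + (1-a) • Y))^2
      = a * (frob X)^2 + (1-a) * (frob Y)^2 - a*(1-a) * (frob (X - Y))^2 := by
  rw [sq_frob, sq_frob, sq_frob, sq_frob]
  simp only [fip_add_left, fip_add_right, fip_smul_left, fip_smul_right,
    fip_sub_left, fip_sub_right]
  rw [fip_comm Y X]
  ring

lemma core_nonexp (Wm : Matrix m n ℝ) (D : Matrix n p ℝ) (μ : ℝ) (hμ0 : 0 ≤ μ)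
    (hμ2 : μ * frob (Wmᵀ * Wm) ≤ 2) :
    frob (D - μ • (Wmᵀ * (Wm * D))) ≤ frob D := by
  refine le_of_sq_le_sq' (frob_nonneg _) (frob_nonneg _) ?_
  rw [sq_frob, sq_frob]
  set G := Wmᵀ * (Wm * D) with hG
  have h1 : fip D G = fip (Wm * D) (Wm * D) := fip_gram Wm D
  have h2 : fip G G ≤ frob (Wmᵀ * Wm) * fip (Wm * D) (Wm * D) := by
    calc fip G G = fip (Wm * D) ((Wm * Wmᵀ) * (Wm * D)) := by
          conv_lhs => rw [hG]
          rw [fip_mul_left' Wmᵀ (Wm * D) G, transpose_transpose, hG, Matrix.mul_assoc]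
      _ ≤ frob (Wm * D) * frob ((Wm * Wmᵀ) * (Wm * D)) := fip_le _ _
      _ ≤ frob (Wm * D) * (frob (Wm * Wmᵀ) * frob (Wm * D)) := by
          exact mul_le_mul_of_nonneg_left (frob_mul_le _ _) (frob_nonneg _)
      _ = frob (Wmᵀ * Wm) * fip (Wm * D) (Wm * D) := by
          rw [frob_gram Wm, ← sq_frob]; ring
  have h3 : 0 ≤ fip (Wm * D) (Wm * D) := fip_self_nonneg _
  have h4 : fip (D - μ • G) (D - μ • G)
      = fip D D - 2 * μ * fip D G + μ^2 * fip G G := by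
    simp only [fip_sub_left, fip_sub_right, fip_smul_left, fip_smul_right]
    rw [fip_comm G D]
    ring
  rw [h4, h1]
  have h5 : μ^2 * fip G G ≤ μ * ((μ * frob (Wmᵀ * Wm)) * fip (Wm * D) (Wm * D)) := by
    have := mul_le_mul_of_nonneg_left h2 (sq_nonneg μ)
    nlinarith []
  have h6 : (μ * frob (Wmᵀ * Wm)) * fip (Wm * D) (Wm * D) ≤ 2 * fip (Wm * D) (Wm * D) :=
    mul_le_mul_of_nonneg_right hμ2 h3
  have h7 : μ * ((μ * frob (Wmᵀ * Wm)) * fip (Wm * D) (Wm * D)) ≤ μ * (2 * fip (Wm * D) (Wm * D)) :=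
    mul_le_mul_of_nonneg_left h6 hμ0
  linarith

lemma key_ineq (Z G C : Matrix m n ℝ) (hC : matNonneg C) (μ : ℝ) :
    μ * fip (pplus (Z - μ • G) - C) G
      ≤ frob (Z - pplus (Z - μ • G)) * frob (Z - C) := by
  set P := pplus (Z - μ • G) with hP
  have h0 := pplus_proj (Z - μ • G) C hC
  have hcs := fip_le (Z - P) (Z - C)
  have hnn := fip_self_nonneg (Z - P)
  rw [← hP] at h0
  simp only [fip_sub_left, fip_sub_right, fip_smul_left, fip_smul_right] at h0 hcs hnn ⊢
  rw [show fip P G = fip G P from fip_comm P G, show fip C G = fip G C from fip_comm C G]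
  linarith [fip_comm Z P, fip_comm P C]

end Toolbox

lemma helper_liminf {u : ℕ → ℝ} {c : ℝ} (hc0 : 0 ≤ c) (hc : c < atTop.liminf u) :
    ∀ᶠ k in atTop, c < u k := by
  by_cases hb : atTop.IsBoundedUnder (· ≥ ·) u
  · exact eventually_lt_of_lt_liminf hc hb
  · exfalso
    have h0 : atTop.liminf u = 0 := by
      rw [Filter.liminf_eq]
      convert Real.sSup_empty using 2
      · rfl
      rw [Set.eq_empty_iff_forall_notMem]
      intro a ha
      exact hb ⟨a, ha⟩
    rw [h0] at hc
    exact absurd hc (not_lt.mpr hc0)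

section SeqAnalysis
variable {m n : Type*} [Fintype m] [Fintype n]

lemma seq_analysis (x : ℕ → Matrix m n ℝ) (F : ℕ → Matrix m n ℝ → Matrix m n ℝ)
    (a : ℕ → ℝ) (p : Matrix m n ℝ) (m₀ : ℕ)
    (ha : ∀ k, a k ∈ Set.Icc (0:ℝ) 1)
    (hrec : ∀ k, x (k+1) = a k • x k + (1 - a k) • F k (x k))
    (hne : ∀ k X Y, frob (F k X - F k Y) ≤ frob (X - Y))
    (hfix : ∀ k ≥ m₀, F k p = p)
    (hliminf : 0 < atTop.liminf a) (hlimsup : atTop.limsup a < 1) :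
    (∀ k ≥ m₀, frob (x k - p) ≤ frob (x m₀ - p)) ∧
      Tendsto (fun k => frob (x k - F k (x k))) atTop (nhds 0) := by
  set aseq : ℕ → ℝ := fun k => (frob (x k - p))^2 with haseq
  set dd : ℕ → ℝ := fun k => frob (x k - F k (x k)) with hdd
  have hdd0 : ∀ k, 0 ≤ dd k := fun k => frob_nonneg _
  have haseq0 : ∀ k, 0 ≤ aseq k := fun k => sq_nonneg _
  -- KM inequality
  have hkm : ∀ k ≥ m₀, aseq (k+1) ≤ aseq k - a k * (1 - a k) * (dd k)^2 := by
    intro k hk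
    have hx : x (k+1) - p = a k • (x k - p) + (1 - a k) • (F k (x k) - p) := by
      rw [hrec k, smul_sub, smul_sub]
      have : a k • p + (1 - a k) • p = p := by
        rw [← add_smul]; ring_nf; rw [one_smul]
      calc a k • x k + (1 - a k) • F k (x k) - p
          = a k • x k + (1 - a k) • F k (x k) - (a k • p + (1 - a k) • p) := by rw [this]
        _ = a k • x k - a k • p + ((1 - a k) • F k (x k) - (1 - a k) • p) := by abel
    have hid := km_id (a k) (x k - p) (F k (x k) - p)
    rw [← hx] at hid
    have hdiff : (x k - p) - (F k (x k) - p) = x k - F k (x k) := by abel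
    rw [hdiff] at hid
    have hnexp : frob (F k (x k) - p) ≤ frob (x k - p) := by
      calc frob (F k (x k) - p) = frob (F k (x k) - F k p) := by rw [hfix k hk]
        _ ≤ frob (x k - p) := hne k (x k) p
    have h1a : 0 ≤ 1 - a k := by linarith [(ha k).2]
    have hsq : (frob (F k (x k) - p))^2 ≤ (frob (x k - p))^2 := by
      nlinarith [frob_nonneg (F k (x k) - p), frob_nonneg (x k - p)]
    have := mul_le_mul_of_nonneg_left hsq h1a
    simp only [haseq]
    nlinarith []
  have hstep : ∀ k ≥ m₀, aseq (k+1) ≤ aseq k := by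
    intro k hk
    have h0 : 0 ≤ a k * (1 - a k) * (dd k)^2 := by
      have := (ha k).1; have := (ha k).2
      have : 0 ≤ a k * (1 - a k) := mul_nonneg (ha k).1 (by linarith [(ha k).2])
      positivity
    linarith [hkm k hk]
  have hmono : ∀ k ≥ m₀, aseq k ≤ aseq m₀ := by
    intro k hk
    induction k, hk using Nat.le_induction with
    | base => exact le_refl _
    | succ k hk ih => exact le_trans (hstep k hk) ih
  constructor
  · intro k hk
    have := hmono k hk
    exact le_of_sq_le_sq' (frob_nonneg _) (frob_nonneg _) this
  -- convergence of dd to 0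
  · set b : ℕ → ℝ := fun j => aseq (m₀ + j) with hb
    have hanti : Antitone b := antitone_nat_of_succ_le fun j => hstep (m₀ + j) (Nat.le_add_right _ _)
    have hbdd : BddBelow (Set.range b) := ⟨0, by rintro y ⟨j, rfl⟩; exact haseq0 _⟩
    have hconv : Tendsto b atTop (nhds (⨅ j, b j)) := tendsto_atTop_ciInf hanti hbdd
    have hconv1 : Tendsto (fun j => b (j + 1)) atTop (nhds (⨅ j, b j)) :=
      hconv.comp (tendsto_add_atTop_nat 1)
    have hdiff0 : Tendsto (fun j => b j - b (j + 1)) atTop (nhds 0) := by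
      have := hconv.sub hconv1
      simpa using this
    set t : ℕ → ℝ := fun k => a k * (1 - a k) * (dd k)^2 with ht
    have ht0 : ∀ k, 0 ≤ t k := fun k =>
      mul_nonneg (mul_nonneg (ha k).1 (by linarith [(ha k).2])) (sq_nonneg _)
    have htle : ∀ j, t (m₀ + j) ≤ b j - b (j + 1) := by
      intro j
      have := hkm (m₀ + j) (Nat.le_add_right _ _)
      simp only [hb, ht]
      have heq : m₀ + j + 1 = m₀ + (j + 1) := by ring
      rw [← heq]
      linarith
    have htend : Tendsto (fun j => t (m₀ + j)) atTop (nhds 0) :=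
      squeeze_zero (fun j => ht0 _) htle hdiff0
    have htendt : Tendsto t atTop (nhds 0) := by
      have : (fun j => t (m₀ + j)) = fun j => t (j + m₀) := by
        funext j; rw [Nat.add_comm]
      rw [this] at htend
      exact (tendsto_add_atTop_iff_nat m₀).mp htend
    -- eventual bounds on a
    obtain ⟨c₁, hc₁pos, hc₁⟩ : ∃ c₁ > 0, ∀ᶠ k in atTop, c₁ < a k := by
      refine ⟨atTop.liminf a / 2, half_pos hliminf, ?_⟩
      exact helper_liminf (le_of_lt (half_pos hliminf)) (half_lt_self hliminf)
    have hc₂ : ∀ᶠ k in atTop, a k < (atTop.limsup a + 1) / 2 := by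
      apply eventually_lt_of_limsup_lt
      · linarith
      · exact ⟨1, Filter.eventually_map.mpr (Filter.Eventually.of_forall fun k => (ha k).2)⟩
    set c₂ : ℝ := (atTop.limsup a + 1) / 2 with hc₂def
    have hc₂lt1 : c₂ < 1 := by
      have hls : 0 ≤ atTop.limsup a := by
        exact le_limsup_of_frequently_le (Filter.Frequently.of_forall fun k => (ha k).1)
          ⟨1, Filter.eventually_map.mpr (Filter.Eventually.of_forall fun k => (ha k).2)⟩
      simp only [hc₂def]; linarith
    set c : ℝ := c₁ * (1 - c₂) with hc
    have hcpos : 0 < c := mul_pos hc₁pos (by linarith)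
    have hddsq : Tendsto (fun k => (dd k)^2) atTop (nhds 0) := by
      apply squeeze_zero' (Filter.Eventually.of_forall fun k => sq_nonneg _)
        (g := fun k => t k / c) ?_ ?_
      · filter_upwards [hc₁, hc₂] with k h1 h2
        have hmul : c ≤ a k * (1 - a k) := by
          have h1a : 0 ≤ 1 - a k := by linarith [(ha k).2]
          have : c₁ * (1 - a k) ≤ a k * (1 - a k) :=
            mul_le_mul_of_nonneg_right (le_of_lt h1) h1a
          have h2' : 1 - c₂ ≤ 1 - a k := by linarith
          have : c₁ * (1 - c₂) ≤ c₁ * (1 - a k) :=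
            mul_le_mul_of_nonneg_left h2' (le_of_lt hc₁pos)
          nlinarith [(ha k).1, (ha k).2]
        rw [le_div_iff₀ hcpos]
        calc (dd k)^2 * c ≤ (dd k)^2 * (a k * (1 - a k)) :=
              mul_le_mul_of_nonneg_left hmul (sq_nonneg _)
          _ = t k := by rw [ht]; ring
      · have := htendt.div_const c
        simpa using this
    have : Tendsto (fun k => Real.sqrt ((dd k)^2)) atTop (nhds (Real.sqrt 0)) :=
      (Real.continuous_sqrt.tendsto 0).comp hddsq
    rw [Real.sqrt_zero] at this
    refine this.congr fun k => ?_
    exact Real.sqrt_sq (hdd0 k)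

end SeqAnalysis

lemma fip_ge_neg {m n : Type*} [Fintype m] [Fintype n] (X Y : Matrix m n ℝ) :
    -(frob X * frob Y) ≤ fip X Y := by
  have h := abs_fip_le X Y
  have := neg_abs_le (fip X Y)
  linarith

lemma fip_zero_right {m n : Type*} [Fintype m] [Fintype n] (X : Matrix m n ℝ) :
    fip X 0 = 0 := by simp [fip]

lemma limsup_nonpos_aux (f : ℕ → ℝ)
    (hlb : ∃ K : ℝ, ∀ᶠ k in atTop, K ≤ f k)
    (h : ∀ ε > (0:ℝ), ∀ᶠ k in atTop, f k ≤ ε) :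
    atTop.limsup f ≤ 0 := by
  obtain ⟨K, hK⟩ := hlb
  have hcb : atTop.IsCoboundedUnder (· ≤ ·) f :=
    Filter.isCoboundedUnder_le_of_eventually_le atTop hK
  refine le_of_forall_pos_le_add fun ε hε => ?_
  rw [zero_add]
  exact Filter.limsup_le_of_le hcb (h ε hε)

set_option maxHeartbeats 2000000 in
theorem stmt_16
    (M N R : ℕ) (hM : 0 < M) (hN : 0 < N) (hR : 0 < R)
    (V : Matrix (Fin M) (Fin N) ℝ)
    (W : ℕ → Matrix (Fin M) (Fin R) ℝ) (H : ℕ → Matrix (Fin R) (Fin N) ℝ)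
    (α β μ lam : ℕ → ℝ)
    (T : ℕ → Matrix (Fin R) (Fin N) ℝ → Matrix (Fin R) (Fin N) ℝ)
    (S : ℕ → Matrix (Fin M) (Fin R) ℝ → Matrix (Fin M) (Fin R) ℝ)
    (hW0 : matNonneg (W 0)) (hH0 : matNonneg (H 0))
    (hα : ∀ n, α n ∈ Set.Icc (0:ℝ) 1) (hβ : ∀ n, β n ∈ Set.Icc (0:ℝ) 1)
    (hμ : ∀ n, W n ≠ 0 → 0 < μ n ∧ μ n ≤ 2 / frob ((W n)ᵀ * W n))
    (hT : ∀ n, W n ≠ 0 → ∀ X, T n X = pplus (X - μ n • ((W n)ᵀ * (W n * X - V))))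
    (hT0 : ∀ n, W n = 0 → ∀ X, T n X = X)
    (hHrec : ∀ n, H (n + 1) = α n • H n + (1 - α n) • T n (H n))
    (hlam : ∀ n, H (n + 1) ≠ 0 → 0 < lam n ∧ lam n ≤ 2 / frob ((H (n + 1))ᵀ * H (n + 1)))
    (hS : ∀ n, H (n + 1) ≠ 0 → ∀ X, S n X = pplus (X - lam n • ((X * H (n + 1) - V) * (H (n + 1))ᵀ)))
    (hS0 : ∀ n, H (n + 1) = 0 → ∀ X, S n X = X)
    (hWrec : ∀ n, W (n + 1) = β n • W n + (1 - β n) • S n (W n))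
    (hA1 : ∃ m₀ : ℕ,
      (∃ Wf : Matrix (Fin M) (Fin R) ℝ, ∀ n ≥ m₀, S n Wf = Wf) ∧
      (∃ Hf : Matrix (Fin R) (Fin N) ℝ, ∀ n ≥ m₀, T n Hf = Hf))
    (hC1α : 0 < atTop.liminf (fun n => α n) ∧ atTop.limsup (fun n => α n) < 1)
    (hC1β : 0 < atTop.liminf (fun n => β n) ∧ atTop.limsup (fun n => β n) < 1)
    (hC2μ : 0 < atTop.liminf (fun n => μ n))
    (hC2lam : 0 < atTop.liminf (fun n => lam n))
    :
    ∀ (Wc : Matrix (Fin M) (Fin R) ℝ) (Hc : Matrix (Fin R) (Fin N) ℝ),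
      matNonneg Wc → matNonneg Hc →
      atTop.limsup (fun n => fip (T n (H n) - Hc) ((W n)ᵀ * (W n * H n - V))) ≤ 0 ∧
      atTop.limsup (fun n => fip (S n (W n) - Wc) ((W n * H (n + 1) - V) * (H (n + 1))ᵀ)) ≤ 0 := by
  intro Wc Hc hWc hHc
  obtain ⟨m₀, ⟨Wf, hWf⟩, ⟨Hf, hHf⟩⟩ := hA1
  -- nonexpansiveness of T
  have hTne : ∀ k X Y, frob (T k X - T k Y) ≤ frob (X - Y) := by
    intro k X Y
    by_cases hWk : W k = 0
    · rw [hT0 k hWk, hT0 k hWk]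
    · rw [hT k hWk X, hT k hWk Y]
      refine (pplus_lip _ _).trans ?_
      have heq : (X - μ k • ((W k)ᵀ * (W k * X - V))) - (Y - μ k • ((W k)ᵀ * (W k * Y - V)))
          = (X - Y) - μ k • ((W k)ᵀ * (W k * (X - Y))) := by
        simp only [Matrix.mul_sub, smul_sub]
        abel
      rw [heq]
      apply core_nonexp _ _ _ (hμ k hWk).1.le
      exact (le_div_iff₀ (frob_gram_pos (W k) hWk)).mp (hμ k hWk).2
  -- nonexpansiveness of S
  have hSne : ∀ k X Y, frob (S k X - S k Y) ≤ frob (X - Y) := by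
    intro k X Y
    by_cases hHk : H (k+1) = 0
    · rw [hS0 k hHk, hS0 k hHk]
    · rw [hS k hHk X, hS k hHk Y]
      refine (pplus_lip _ _).trans ?_
      have heq : (X - lam k • ((X * H (k+1) - V) * (H (k+1))ᵀ))
            - (Y - lam k • ((Y * H (k+1) - V) * (H (k+1))ᵀ))
          = (X - Y) - lam k • (((X - Y) * H (k+1)) * (H (k+1))ᵀ) := by
        simp only [Matrix.sub_mul, smul_sub]
        abel
      rw [heq, ← frob_transpose, ← frob_transpose (X - Y)]
      have heq2 : ((X - Y) - lam k • (((X - Y) * H (k+1)) * (H (k+1))ᵀ))ᵀ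
          = (X - Y)ᵀ - lam k • (((H (k+1))ᵀ)ᵀ * ((H (k+1))ᵀ * (X - Y)ᵀ)) := by
        rw [transpose_sub, transpose_smul, transpose_mul, transpose_mul,
          transpose_transpose]
      rw [heq2]
      apply core_nonexp _ _ _ (hlam k hHk).1.le
      have hfr : frob (((H (k+1))ᵀ)ᵀ * (H (k+1))ᵀ) = frob ((H (k+1))ᵀ * H (k+1)) := by
        rw [transpose_transpose]
        exact frob_gram (H (k+1))
      rw [hfr]
      exact (le_div_iff₀ (frob_gram_pos (H (k+1)) hHk)).mp (hlam k hHk).2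
  obtain ⟨hBH, hdH⟩ := seq_analysis H T α Hf m₀ hα hHrec hTne hHf hC1α.1 hC1α.2
  obtain ⟨hBW, hdW⟩ := seq_analysis W S β Wf m₀ hβ hWrec hSne hWf hC1β.1 hC1β.2
  set BH := frob (H m₀ - Hf) with hBHdef
  set BW := frob (W m₀ - Wf) with hBWdef
  have hBH0 : 0 ≤ BH := frob_nonneg _
  have hBW0 : 0 ≤ BW := frob_nonneg _
  have hCH : ∀ k ≥ m₀, frob (H k) ≤ BH + frob Hf := by
    intro k hk
    calc frob (H k) = frob ((H k - Hf) + Hf) := by rw [sub_add_cancel]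
      _ ≤ frob (H k - Hf) + frob Hf := frob_add_le _ _
      _ ≤ BH + frob Hf := by linarith [hBH k hk]
  have hCW : ∀ k ≥ m₀, frob (W k) ≤ BW + frob Wf := by
    intro k hk
    calc frob (W k) = frob ((W k - Wf) + Wf) := by rw [sub_add_cancel]
      _ ≤ frob (W k - Wf) + frob Wf := frob_add_le _ _
      _ ≤ BW + frob Wf := by linarith [hBW k hk]
  set CH := BH + frob Hf with hCHdef
  set CW := BW + frob Wf with hCWdef
  have hCH0 : 0 ≤ CH := add_nonneg hBH0 (frob_nonneg _)
  have hCW0 : 0 ≤ CW := add_nonneg hBW0 (frob_nonneg _)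
  constructor
  · -- H side
    have hG : ∀ k, ((W k)ᵀ * (W k * H k - V)) = (W k)ᵀ * (W k * H k - V) := fun k => rfl
    set B' : ℝ := BH + frob (Hf - Hc) + 1 with hB'
    have hB'pos : 0 < B' := by
      have := frob_nonneg (Hf - Hc); rw [hB']; linarith
    have hHnHc : ∀ k ≥ m₀, frob (H k - Hc) ≤ B' := by
      intro k hk
      calc frob (H k - Hc) = frob ((H k - Hf) + (Hf - Hc)) := by rw [sub_add_sub_cancel]
        _ ≤ frob (H k - Hf) + frob (Hf - Hc) := frob_add_le _ _
        _ ≤ B' := by rw [hB']; linarith [hBH k hk]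
    have hGbd : ∀ k ≥ m₀, frob ((W k)ᵀ * (W k * H k - V)) ≤ CW * (CW * CH + frob V) := by
      intro k hk
      calc frob ((W k)ᵀ * (W k * H k - V)) ≤ frob ((W k)ᵀ) * frob (W k * H k - V) :=
            frob_mul_le _ _
        _ = frob (W k) * frob (W k * H k - V) := by rw [frob_transpose]
        _ ≤ CW * (CW * CH + frob V) := by
            have h1 : frob (W k * H k - V) ≤ CW * CH + frob V := by
              calc frob (W k * H k - V) ≤ frob (W k * H k) + frob V := frob_sub_le _ _
                _ ≤ frob (W k) * frob (H k) + frob V := by linarith [frob_mul_le (W k) (H k)]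
                _ ≤ CW * CH + frob V := by
                    have := hCW k hk; have := hCH k hk
                    nlinarith [frob_nonneg (W k), frob_nonneg (H k)]
            have h2 : 0 ≤ frob (W k * H k - V) := frob_nonneg _
            nlinarith [hCW k hk, frob_nonneg (W k)]
    apply limsup_nonpos_aux
    · -- lower bound
      refine ⟨-((1 + B') * (CW * (CW * CH + frob V))), ?_⟩
      have hev1 : ∀ᶠ k in atTop, m₀ ≤ k := eventually_ge_atTop m₀
      have hevd : ∀ᶠ k in atTop, frob (H k - T k (H k)) < 1 :=
        hdH.eventually_lt_const one_pos
      filter_upwards [hev1, hevd] with k hk hdk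
      have hTb : frob (T k (H k) - Hc) ≤ 1 + B' := by
        calc frob (T k (H k) - Hc) = frob ((T k (H k) - H k) + (H k - Hc)) := by
              rw [sub_add_sub_cancel]
          _ ≤ frob (T k (H k) - H k) + frob (H k - Hc) := frob_add_le _ _
          _ ≤ 1 + B' := by
              have : frob (T k (H k) - H k) = frob (H k - T k (H k)) := by
                rw [← frob_neg, neg_sub]
              rw [this]
              linarith [hHnHc k hk]
      calc -((1 + B') * (CW * (CW * CH + frob V)))
          ≤ -(frob (T k (H k) - Hc) * frob ((W k)ᵀ * (W k * H k - V))) := by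
            have h1 := frob_nonneg (T k (H k) - Hc)
            have h2 := frob_nonneg ((W k)ᵀ * (W k * H k - V))
            have h3 := hGbd k hk
            nlinarith
        _ ≤ fip (T k (H k) - Hc) ((W k)ᵀ * (W k * H k - V)) := fip_ge_neg _ _
    · -- eventual upper bound
      intro ε hε
      set μ₀ : ℝ := atTop.liminf (fun n => μ n) / 2 with hμ₀
      have hμ₀pos : 0 < μ₀ := half_pos hC2μ
      have hevμ : ∀ᶠ k in atTop, μ₀ < μ k :=
        helper_liminf hμ₀pos.le (half_lt_self hC2μ)
      have hevd : ∀ᶠ k in atTop, frob (H k - T k (H k)) < ε * μ₀ / B' :=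
        hdH.eventually_lt_const (by positivity)
      filter_upwards [eventually_ge_atTop m₀, hevμ, hevd] with k hk hμk hdk
      by_cases hWk : W k = 0
      · simp only [hWk, Matrix.transpose_zero, Matrix.zero_mul, fip_zero_right]
        linarith
      · have hμpos : 0 < μ k := lt_trans hμ₀pos hμk
        have hkey := key_ineq (H k) ((W k)ᵀ * (W k * H k - V)) Hc hHc (μ k)
        rw [← hT k hWk (H k)] at hkey
        have hrhs : frob (H k - T k (H k)) * frob (H k - Hc) < ε * μ₀ := by
          have h1 := frob_nonneg (H k - T k (H k))
          have h2 := hHnHc k hk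
          have h3 := frob_nonneg (H k - Hc)
          calc frob (H k - T k (H k)) * frob (H k - Hc)
              ≤ frob (H k - T k (H k)) * B' := mul_le_mul_of_nonneg_left h2 h1
            _ < (ε * μ₀ / B') * B' := by
                apply mul_lt_mul_of_pos_right hdk hB'pos
            _ = ε * μ₀ := div_mul_cancel₀ _ (ne_of_gt hB'pos)
        have hmyk : μ k * fip (T k (H k) - Hc) ((W k)ᵀ * (W k * H k - V)) < ε * μ₀ :=
          lt_of_le_of_lt hkey hrhs
        rcases le_or_gt (fip (T k (H k) - Hc) ((W k)ᵀ * (W k * H k - V))) 0 with hf0 | hf0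
        · linarith
        · nlinarith [mul_le_mul_of_nonneg_right hμk.le hf0.le]
  · -- W side
    set B' : ℝ := BW + frob (Wf - Wc) + 1 with hB'
    have hB'pos : 0 < B' := by
      have := frob_nonneg (Wf - Wc); rw [hB']; linarith
    have hWnWc : ∀ k ≥ m₀, frob (W k - Wc) ≤ B' := by
      intro k hk
      calc frob (W k - Wc) = frob ((W k - Wf) + (Wf - Wc)) := by rw [sub_add_sub_cancel]
        _ ≤ frob (W k - Wf) + frob (Wf - Wc) := frob_add_le _ _
        _ ≤ B' := by rw [hB']; linarith [hBW k hk]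
    have hG2bd : ∀ k ≥ m₀, frob ((W k * H (k+1) - V) * (H (k+1))ᵀ) ≤ (CW * CH + frob V) * CH := by
      intro k hk
      have hk1 : m₀ ≤ k + 1 := le_trans hk (Nat.le_succ k)
      calc frob ((W k * H (k+1) - V) * (H (k+1))ᵀ)
            ≤ frob (W k * H (k+1) - V) * frob ((H (k+1))ᵀ) := frob_mul_le _ _
        _ = frob (W k * H (k+1) - V) * frob (H (k+1)) := by rw [frob_transpose]
        _ ≤ (CW * CH + frob V) * CH := by
            have h1 : frob (W k * H (k+1) - V) ≤ CW * CH + frob V := by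
              calc frob (W k * H (k+1) - V) ≤ frob (W k * H (k+1)) + frob V := frob_sub_le _ _
                _ ≤ frob (W k) * frob (H (k+1)) + frob V := by
                    linarith [frob_mul_le (W k) (H (k+1))]
                _ ≤ CW * CH + frob V := by
                    have := hCW k hk; have := hCH (k+1) hk1
                    nlinarith [frob_nonneg (W k), frob_nonneg (H (k+1))]
            have h2 := hCH (k+1) hk1
            nlinarith [frob_nonneg (W k * H (k+1) - V), frob_nonneg (H (k+1))]
    apply limsup_nonpos_aux
    · refine ⟨-((1 + B') * ((CW * CH + frob V) * CH)), ?_⟩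
      have hevd : ∀ᶠ k in atTop, frob (W k - S k (W k)) < 1 :=
        hdW.eventually_lt_const one_pos
      filter_upwards [eventually_ge_atTop m₀, hevd] with k hk hdk
      have hTb : frob (S k (W k) - Wc) ≤ 1 + B' := by
        calc frob (S k (W k) - Wc) = frob ((S k (W k) - W k) + (W k - Wc)) := by
              rw [sub_add_sub_cancel]
          _ ≤ frob (S k (W k) - W k) + frob (W k - Wc) := frob_add_le _ _
          _ ≤ 1 + B' := by
              have : frob (S k (W k) - W k) = frob (W k - S k (W k)) := by
                rw [← frob_neg, neg_sub]
              rw [this]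
              linarith [hWnWc k hk]
      calc -((1 + B') * ((CW * CH + frob V) * CH))
          ≤ -(frob (S k (W k) - Wc) * frob ((W k * H (k+1) - V) * (H (k+1))ᵀ)) := by
            have h1 := frob_nonneg (S k (W k) - Wc)
            have h2 := frob_nonneg ((W k * H (k+1) - V) * (H (k+1))ᵀ)
            have h3 := hG2bd k hk
            nlinarith
        _ ≤ fip (S k (W k) - Wc) ((W k * H (k+1) - V) * (H (k+1))ᵀ) := fip_ge_neg _ _
    · intro ε hε
      set lam₀ : ℝ := atTop.liminf (fun n => lam n) / 2 with hlam₀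
      have hlam₀pos : 0 < lam₀ := half_pos hC2lam
      have hevlam : ∀ᶠ k in atTop, lam₀ < lam k :=
        helper_liminf hlam₀pos.le (half_lt_self hC2lam)
      have hevd : ∀ᶠ k in atTop, frob (W k - S k (W k)) < ε * lam₀ / B' :=
        hdW.eventually_lt_const (by positivity)
      filter_upwards [eventually_ge_atTop m₀, hevlam, hevd] with k hk hlamk hdk
      by_cases hHk : H (k+1) = 0
      · simp only [hHk, Matrix.transpose_zero, Matrix.mul_zero, fip_zero_right]
        linarith
      · have hkey := key_ineq (W k) ((W k * H (k+1) - V) * (H (k+1))ᵀ) Wc hWc (lam k)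
        rw [← hS k hHk (W k)] at hkey
        have hrhs : frob (W k - S k (W k)) * frob (W k - Wc) < ε * lam₀ := by
          have h1 := frob_nonneg (W k - S k (W k))
          have h2 := hWnWc k hk
          calc frob (W k - S k (W k)) * frob (W k - Wc)
              ≤ frob (W k - S k (W k)) * B' := mul_le_mul_of_nonneg_left h2 h1
            _ < (ε * lam₀ / B') * B' := mul_lt_mul_of_pos_right hdk hB'pos
            _ = ε * lam₀ := div_mul_cancel₀ _ (ne_of_gt hB'pos)
        have hmyk : lam k * fip (S k (W k) - Wc) ((W k * H (k+1) - V) * (H (k+1))ᵀ) < ε * lam₀ :=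
          lt_of_le_of_lt hkey hrhs
        rcases le_or_gt (fip (S k (W k) - Wc) ((W k * H (k+1) - V) * (H (k+1))ᵀ)) 0 with hf0 | hf0
        · linarith
        · nlinarith [mul_le_mul_of_nonneg_right hlamk.le hf0.le]
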